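/- If the tail functions αₙ(s) converge to 0 uniformly in n as s → ∞, and the total variance Bₙ² = σ₁² + ⋯ + σₙ² tends to infinity, then the Lindeberg condition holds: for every ε > 0, (1/Bₙ²)·Σ_{k=1}^{n} E[(ξ_k−m_k)²·1_{|ξ_k−m_k| ≥ ε Bₙ}] → 0 as n → ∞. -/

import Mathlib

open MeasureTheory ProbabilityTheory Filter

theorem lindeberg_of_unif_convergence {Ω : Type*} [MeasurableSpace Ω] (μ : Measure Ω)
    [IsProbabilityMeasure μ] (ξ : ℕ → Ω → ℝ) (hmeas : ∀ n, Measurable (ξ n))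
    (hindep : iIndepFun ξ μ)
    (hξ : ∀ n, MemLp (ξ n) 2 μ)
    (m : ℕ → ℝ) (hm : ∀ n, m n = μ[ξ n])
    (σ2 : ℕ → ℝ) (hσ2 : ∀ n, σ2 n = variance (ξ n) μ)
    (B : ℕ → ℝ) (hB : ∀ n, B n = Real.sqrt (∑ k ∈ Finset.Icc 1 n, σ2 k))
    (α : ℕ → ℝ → ℝ)
    (hα : ∀ n s, α n s = if σ2 n = 0 then 0
      else (σ2 n)⁻¹ * ∫ ω in {ω | s ≤ |ξ n ω - m n|}, (ξ n ω - m n) ^ 2 ∂μ)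
    (hunif : ∀ ε > 0, ∃ s₀ : ℝ, ∀ n, ∀ s ≥ s₀, α n s ≤ ε)
    (hBinf : Tendsto B atTop atTop) :
    ∀ ε > 0, Tendsto (fun n =>
      (B n ^ 2)⁻¹ * ∑ k ∈ Finset.Icc 1 n,
        ∫ ω in {ω | ε * B n ≤ |ξ k ω - m k|}, (ξ k ω - m k) ^ 2 ∂μ)
      atTop (nhds 0) := by

  intro ε hε
  rw [NormedAddCommGroup.tendsto_nhds_zero]
  intro δ hδ
  obtain ⟨s₀, hs₀⟩ := hunif (δ / 2) (by positivity)
  have hσnn : ∀ k, 0 ≤ σ2 k := fun k => (hσ2 k) ▸ variance_nonneg _ _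
  have hBnn : ∀ n, 0 ≤ B n := fun n => (hB n) ▸ Real.sqrt_nonneg _
  have hBsq : ∀ n, B n ^ 2 = ∑ k ∈ Finset.Icc 1 n, σ2 k := fun n => by
    rw [hB n, Real.sq_sqrt (Finset.sum_nonneg fun k _ => hσnn k)]
  have hint : ∀ k, Integrable (fun ω => (ξ k ω - m k) ^ 2) μ := fun k => by
    have h := ((hξ k).sub (memLp_const (m k))).integrable_sq
    simpa [Pi.sub_apply] using h
  have hmean : ∀ k, ∫ ω, (ξ k ω - m k) ^ 2 ∂μ = σ2 k := fun k => by
    rw [hσ2 k, variance_eq_integral (hξ k).aestronglyMeasurable.aemeasurable, ← hm k]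
  have hnonneg : ∀ k s, 0 ≤ ∫ ω in {ω | s ≤ |ξ k ω - m k|}, (ξ k ω - m k) ^ 2 ∂μ :=
    fun k s => setIntegral_nonneg
      (measurableSet_le measurable_const ((hmeas k).sub measurable_const).abs)
      (fun ω _ => sq_nonneg _)
  have key : ∀ k s, s₀ ≤ s →
      ∫ ω in {ω | s ≤ |ξ k ω - m k|}, (ξ k ω - m k) ^ 2 ∂μ ≤ δ / 2 * σ2 k := by
    intro k s hs
    by_cases h : σ2 k = 0
    · have hle : ∫ ω in {ω | s ≤ |ξ k ω - m k|}, (ξ k ω - m k) ^ 2 ∂μ ≤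
          ∫ ω, (ξ k ω - m k) ^ 2 ∂μ :=
        setIntegral_le_integral (hint k) (Filter.Eventually.of_forall fun ω => sq_nonneg _)
      rw [hmean k, h] at hle
      simpa [h] using hle
    · have hpos : 0 < σ2 k := lt_of_le_of_ne (hσnn k) (Ne.symm h)
      have hα' := hs₀ k s hs
      rw [hα k s, if_neg h] at hα'
      calc ∫ ω in {ω | s ≤ |ξ k ω - m k|}, (ξ k ω - m k) ^ 2 ∂μ
          = σ2 k * ((σ2 k)⁻¹ * ∫ ω in {ω | s ≤ |ξ k ω - m k|}, (ξ k ω - m k) ^ 2 ∂μ) := by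
            field_simp
        _ ≤ σ2 k * (δ / 2) := by
            exact mul_le_mul_of_nonneg_left hα' (hσnn k)
        _ = δ / 2 * σ2 k := mul_comm _ _
  have hev1 : ∀ᶠ n in atTop, s₀ ≤ ε * B n := by
    filter_upwards [hBinf.eventually_ge_atTop (s₀ / ε)] with n hn
    rw [div_le_iff₀ hε] at hn
    linarith [hn]
  have hev2 : ∀ᶠ n in atTop, (1 : ℝ) ≤ B n := hBinf.eventually_ge_atTop 1
  filter_upwards [hev1, hev2] with n h1 h2
  have hBpos : 0 < B n ^ 2 := by positivity
  have hSnn : 0 ≤ ∑ k ∈ Finset.Icc 1 n,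
      ∫ ω in {ω | ε * B n ≤ |ξ k ω - m k|}, (ξ k ω - m k) ^ 2 ∂μ :=
    Finset.sum_nonneg fun k _ => hnonneg k _
  have hSle : ∑ k ∈ Finset.Icc 1 n,
      ∫ ω in {ω | ε * B n ≤ |ξ k ω - m k|}, (ξ k ω - m k) ^ 2 ∂μ ≤ δ / 2 * B n ^ 2 := by
    rw [hBsq n, Finset.mul_sum]
    exact Finset.sum_le_sum fun k _ => key k _ h1
  have hfnn : 0 ≤ (B n ^ 2)⁻¹ * ∑ k ∈ Finset.Icc 1 n,
      ∫ ω in {ω | ε * B n ≤ |ξ k ω - m k|}, (ξ k ω - m k) ^ 2 ∂μ := by positivity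
  rw [Real.norm_eq_abs, abs_of_nonneg hfnn]
  have : (B n ^ 2)⁻¹ * ∑ k ∈ Finset.Icc 1 n,
      ∫ ω in {ω | ε * B n ≤ |ξ k ω - m k|}, (ξ k ω - m k) ^ 2 ∂μ ≤ δ / 2 := by
    rw [inv_mul_le_iff₀ hBpos]
    linarith [hSle]
  linarith
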